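/- For integers k ≥ t ≥ 2 and v ≥ 2, there exists a covering array CA(N; t, k, v) with N ≤ (log(C(k,t)) + t·log v) / log(v^t/(v^t−1)). (Stein–Lovász–Johnson bound.) -/

import Mathlib

/-!
Greedy covering. Call a `t`-set of columns together with a symbol on each of them an interaction.
Each interaction agrees with `v ^ (k - t)` of the `v ^ k` possible rows, so by double counting
some row covers at least a `1 / v ^ t` fraction of any set of interactions. Taking such a row
repeatedly shrinks `u` uncovered interactions to at most `u (1 - v ^ (-t))`; tracking
`(v ^ t / (v ^ t - 1)) ^ N ≤ max u (3 / 2)` along the way (the `3 / 2` pays for the last row, since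
`v ^ t ≥ 4`) gives `N` rows covering everything with `(v ^ t / (v ^ t - 1)) ^ N ≤ C(k, t) v ^ t`.
-/

open scoped Classical

/-- `A` is a covering array of strength `t`: every `t` distinct columns contain
every `t`-tuple of symbols in some row. -/
def IsCoveringArray {N k v : ℕ} (t : ℕ) (A : Fin N → Fin k → Fin v) : Prop :=
  ∀ c : Fin t → Fin k, Function.Injective c → ∀ a : Fin t → Fin v,
    ∃ r : Fin N, ∀ i : Fin t, A r (c i) = a i

open Finset

theorem card_filter_restrict_eq {ι β : Type*} [Fintype ι] [DecidableEq ι] [Fintype β]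
    [DecidableEq β] (s : Finset ι) (a : s → β) :
    #{r : ι → β | s.restrict r = a} = Fintype.card β ^ (Fintype.card ι - #s) := by
  have hpi : ({r : ι → β | s.restrict r = a} : Finset (ι → β)) =
      Fintype.piFinset fun j => if h : j ∈ s then {a ⟨j, h⟩} else univ := by
    ext r
    simp only [mem_filter, mem_univ, true_and, Fintype.mem_piFinset, funext_iff, Subtype.forall,
      restrict]
    refine ⟨fun h j => ?_, fun h j hj => ?_⟩
    · by_cases hj : j ∈ s <;> simp [hj, h]
    · simpa [hj] using h j
  rw [hpi, Fintype.card_piFinset]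
  simp [apply_dite, prod_ite, filter_not, card_sdiff]

section GreedyCover

variable {R I : Type*} [Fintype R] [Nonempty R] (covers : R → I → Prop) [DecidableRel covers]
  {x : ℝ}

theorem exists_le_mul_card_filter (S : Finset I)
    (hdense : ∀ i ∈ S, (Fintype.card R : ℝ) ≤ x * #{r | covers r i}) :
    ∃ r, (#S : ℝ) ≤ x * #{i ∈ S | covers r i} := by
  have hcount : ∑ r : R, (#{i ∈ S | covers r i} : ℝ) = ∑ i ∈ S, (#{r | covers r i} : ℝ) := by
    exact_mod_cast sum_card_bipartiteAbove_eq_sum_card_bipartiteBelow covers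
  obtain ⟨r, -, hr⟩ := exists_le_of_sum_le (s := univ) univ_nonempty
    (f := fun _ => (#S : ℝ)) (g := fun r => x * #{i ∈ S | covers r i}) <| by
    calc ∑ _r : R, (#S : ℝ) = ∑ _i ∈ S, (Fintype.card R : ℝ) := by simp [mul_comm]
      _ ≤ ∑ i ∈ S, x * #{r | covers r i} := sum_le_sum hdense
      _ = ∑ r : R, x * #{i ∈ S | covers r i} := by rw [← mul_sum, ← mul_sum, hcount]
  exact ⟨r, hr⟩

theorem div_sub_one_mul_max_le {u u' : ℝ} (hx : 4 ≤ x) (hu : 2 ≤ u)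
    (hshrink : x * u' ≤ (x - 1) * u) : x / (x - 1) * max u' (3 / 2) ≤ u := by
  have hx1 : 0 < x - 1 := by linarith
  rw [mul_max_of_nonneg _ _ (div_pos (by linarith) hx1).le, div_mul_eq_mul_div,
    div_mul_eq_mul_div]
  refine max_le ?_ ?_ <;> rw [div_le_iff₀ hx1] <;> nlinarith

theorem exists_cover_of_dense (hx : 4 ≤ x) (S : Finset I)
    (hdense : ∀ i ∈ S, (Fintype.card R : ℝ) ≤ x * #{r | covers r i}) :
    ∃ (N : ℕ) (rows : Fin N → R), (∀ i ∈ S, ∃ n, covers (rows n) i) ∧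
      (x / (x - 1)) ^ N ≤ max (#S : ℝ) (3 / 2) := by
  have hρ : 0 ≤ x / (x - 1) := (div_pos (by linarith) (by linarith)).le
  induction S using Finset.strongInduction with
  | H S ih =>
  rcases S.eq_empty_or_nonempty with rfl | hS
  · exact ⟨0, Fin.elim0, by simp, by norm_num⟩
  obtain ⟨r₀, hr₀⟩ := exists_le_mul_card_filter covers S hdense
  set S' := {i ∈ S | ¬covers r₀ i}
  have hsplit : (#{i ∈ S | covers r₀ i} : ℝ) + #S' = #S := by
    exact_mod_cast card_filter_add_card_filter_not _
  have hshrink : x * #S' ≤ (x - 1) * #S := by nlinarith [(Nat.cast_nonneg #S' : (0 : ℝ) ≤ #S')]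
  rcases S'.eq_empty_or_nonempty with hS' | hS'
  · refine ⟨1, fun _ => r₀, fun i hi => ⟨0, not_not.mp fun h => ?_⟩, ?_⟩
    · exact eq_empty_iff_forall_notMem.mp hS' i (mem_filter.mpr ⟨hi, h⟩)
    · rw [pow_one]
      refine le_max_of_le_right ?_
      rw [div_le_iff₀ (by linarith)]
      linarith
  have hlt : #S' < #S := by
    have : (0 : ℝ) < #S := by exact_mod_cast hS.card_pos
    exact_mod_cast (show (#S' : ℝ) < #S by nlinarith)
  have htwo : (2 : ℝ) ≤ #S := by exact_mod_cast (show 2 ≤ #S by have := hS'.card_pos; omega)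
  obtain ⟨N, rows, hcover, hbound⟩ := ih S'
    ((filter_subset _ _).ssubset_of_ne fun h => hlt.ne (congrArg card h))
    fun i hi => hdense i (mem_of_mem_filter i hi)
  refine ⟨N + 1, Fin.cons r₀ rows, fun i hi => ?_, ?_⟩
  · by_cases h : covers r₀ i
    · exact ⟨0, h⟩
    · obtain ⟨n, hn⟩ := hcover i (mem_filter.mpr ⟨hi, h⟩)
      exact ⟨n.succ, hn⟩
  calc (x / (x - 1)) ^ (N + 1) = x / (x - 1) * (x / (x - 1)) ^ N := pow_succ' _ _
    _ ≤ x / (x - 1) * max (#S' : ℝ) (3 / 2) := by gcongr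
    _ ≤ #S := div_sub_one_mul_max_le hx htwo hshrink
    _ ≤ max (#S : ℝ) (3 / 2) := le_max_left _ _

end GreedyCover

abbrev Interaction (t k v : ℕ) := Σ s : {s : Finset (Fin k) // #s = t}, (s.1 → Fin v)

theorem card_interaction (t k v : ℕ) :
    Fintype.card (Interaction t k v) = k.choose t * v ^ t := by
  simp only [Fintype.card_sigma, Fintype.card_fun, Fintype.card_coe, Fintype.card_fin]
  rw [sum_congr rfl fun s _ => by rw [s.2], sum_const, card_univ, Fintype.card_finset_len,
    Fintype.card_fin, smul_eq_mul]

theorem isCoveringArray_of_forall_interaction {N t k v : ℕ} {A : Fin N → Fin k → Fin v}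
    (hA : ∀ x : Interaction t k v, ∃ n, x.1.1.restrict (A n) = x.2) : IsCoveringArray t A := by
  intro c hc a
  let s : {s : Finset (Fin k) // #s = t} := ⟨univ.map ⟨c, hc⟩, by simp⟩
  obtain ⟨n, hn⟩ := hA ⟨s, fun j => a ((Equiv.ofInjective c hc).symm ⟨j, by
    obtain ⟨i, -, hi⟩ := mem_map.mp j.2
    exact ⟨i, hi⟩⟩)⟩
  exact ⟨n, fun i => by simpa using congrFun hn ⟨c i, by simp [s]⟩⟩

/-- Stein–Lovász–Johnson bound: for `k ≥ t ≥ 2`, `v ≥ 2` there is a covering array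
`CA(N; t, k, v)` with `N ≤ (log C(k,t) + t log v) / log (v^t/(v^t − 1))`. -/
theorem stein_lovasz_johnson (t k v : ℕ) (ht : 2 ≤ t) (htk : t ≤ k) (hv : 2 ≤ v) :
    ∃ (N : ℕ) (A : Fin N → Fin k → Fin v), IsCoveringArray t A ∧
      (N : ℝ) ≤ (Real.log (k.choose t) + t * Real.log v) /
        Real.log ((v : ℝ) ^ t / ((v : ℝ) ^ t - 1)) := by
  have hx : (4 : ℝ) ≤ v ^ t :=
    calc (4 : ℝ) = 2 ^ 2 := by norm_num
      _ ≤ 2 ^ t := pow_le_pow_right₀ one_le_two ht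
      _ ≤ v ^ t := pow_le_pow_left₀ zero_le_two (by exact_mod_cast hv) t
  have hdense (x : Interaction t k v) : (Fintype.card (Fin k → Fin v) : ℝ) ≤
      v ^ t * #{r : Fin k → Fin v | x.1.1.restrict r = x.2} := by
    rw [card_filter_restrict_eq, x.1.2]
    simp [← pow_add, Nat.add_sub_cancel' htk]
  have : NeZero v := ⟨by omega⟩
  obtain ⟨N, A, hcover, hbound⟩ := exists_cover_of_dense
    (fun (r : Fin k → Fin v) (x : Interaction t k v) => x.1.1.restrict r = x.2) hx univ
    fun x _ => hdense x
  refine ⟨N, A, isCoveringArray_of_forall_interaction fun x => hcover x (mem_univ x), ?_⟩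
  have hC : (1 : ℝ) ≤ k.choose t := by exact_mod_cast Nat.choose_pos htk
  have hρ : 1 < (v : ℝ) ^ t / ((v : ℝ) ^ t - 1) := (one_lt_div (by linarith)).mpr (by linarith)
  rw [card_univ, card_interaction, Nat.cast_mul, Nat.cast_pow, max_eq_left (by nlinarith)]
    at hbound
  rw [le_div_iff₀ (Real.log_pos hρ), ← Real.log_pow, ← Real.log_pow,
    ← Real.log_mul (by positivity) (by positivity)]
  exact Real.log_le_log (by positivity) hbound
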